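/- Suppose monic matrix polynomials Q_n(x;t) satisfy x Q_{2n} = Q_{2n+1} + ξ_n Q_{2n-1}, x Q_{2n+1} = Q_{2n+2} + ζ_{n+1} Q_{2n}, together with ∂_t Q_{2n} = -ξ_n ζ_n Q_{2n-2} and ∂_t Q_{2n+1} = -ζ_{n+1} ξ_n Q_{2n-1}. Then the non-abelian Volterra lattice holds: ∂_t ξ_n = ζ_{n+1} ξ_n - ξ_n ζ_n and ∂_t ζ_{n+1} = ξ_{n+1} ζ_{n+1} - ζ_{n+1} ξ_n. -/

import Mathlib

/-!
Compare the coefficients of `x ^ (m - 1)` in `x Q_m = Q_{m+1} + a_m Q_{m-1}`: since `Q_{m-1}`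
is monic of degree `m - 1`, the recurrence coefficient is read off as
`a_m = [x ^ (m - 1)] (x Q_m) - [x ^ (m - 1)] Q_{m+1}`. Differentiating this identity with
`∂_t Q_m = -b_m Q_{m-2}` and `∂_t Q_{m+1} = -b_{m+1} Q_{m-1}`, and using monicity once more,
gives `∂_t a_m = b_{m+1} - b_m`, which is the Volterra lattice for `a_{2n} = ξ_n`,
`a_{2n+1} = ζ_{n+1}`, `b_{2n} = ξ_n ζ_n`, `b_{2n+1} = ζ_{n+1} ξ_n`.
-/

open Polynomial

theorem Polynomial.Monic.eq_coeff_sub_coeff_of_eq_add_C_mul {R : Type*} [Ring R]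
    {F G M : R[X]} {a : R} (hM : M.Monic) (h : F = G + C a * M) :
    a = F.coeff M.natDegree - G.coeff M.natDegree := by
  rw [h, coeff_add, coeff_C_mul, hM.coeff_natDegree, mul_one, add_sub_cancel_left]

section EntrywiseDeriv

variable {ι κ : Type*}

def HasEntrywiseDerivAt (f : ℝ → Matrix ι κ ℝ) (f' : Matrix ι κ ℝ) (t : ℝ) : Prop :=
  ∀ i j, HasDerivAt (fun s => f s i j) (f' i j) t

theorem HasEntrywiseDerivAt.unique {f : ℝ → Matrix ι κ ℝ} {f₁' f₂' : Matrix ι κ ℝ} {t : ℝ}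
    (h₁ : HasEntrywiseDerivAt f f₁' t) (h₂ : HasEntrywiseDerivAt f f₂' t) : f₁' = f₂' :=
  Matrix.ext fun i j => (h₁ i j).unique (h₂ i j)

theorem HasEntrywiseDerivAt.sub {f g : ℝ → Matrix ι κ ℝ} {f' g' : Matrix ι κ ℝ} {t : ℝ}
    (hf : HasEntrywiseDerivAt f f' t) (hg : HasEntrywiseDerivAt g g' t) :
    HasEntrywiseDerivAt (fun s => f s - g s) (f' - g') t :=
  fun i j => (hf i j).sub (hg i j)

theorem hasEntrywiseDerivAt_const (A : Matrix ι κ ℝ) (t : ℝ) :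
    HasEntrywiseDerivAt (fun _ => A) 0 t :=
  fun i j => hasDerivAt_const t (A i j)

end EntrywiseDeriv

section CoeffDeriv

variable {ι : Type*} [Fintype ι] [DecidableEq ι]

def HasCoeffDerivAt (P : ℝ → (Matrix ι ι ℝ)[X]) (P' : (Matrix ι ι ℝ)[X]) (t : ℝ) : Prop :=
  ∀ k, HasEntrywiseDerivAt (fun s => (P s).coeff k) (P'.coeff k) t

theorem HasCoeffDerivAt.X_mul {P : ℝ → (Matrix ι ι ℝ)[X]} {P' : (Matrix ι ι ℝ)[X]} {t : ℝ}
    (hP : HasCoeffDerivAt P P' t) : HasCoeffDerivAt (fun s => X * P s) (X * P') t := by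
  rintro (_ | k)
  · simpa only [coeff_X_mul_zero] using hasEntrywiseDerivAt_const 0 t
  · simpa only [coeff_X_mul] using hP k

theorem HasEntrywiseDerivAt.eq_of_X_mul_eq_add_C_mul
    {P S M : ℝ → (Matrix ι ι ℝ)[X]} {R : (Matrix ι ι ℝ)[X]} {a : ℝ → Matrix ι ι ℝ}
    {a' b c : Matrix ι ι ℝ} {d : ℕ} {t : ℝ}
    (ha : HasEntrywiseDerivAt a a' t)
    (hrec : ∀ s, X * P s = S s + C (a s) * M s)
    (hM : ∀ s, (M s).Monic ∧ (M s).natDegree = d)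
    (hP : HasCoeffDerivAt P (C (-b) * R) t) (hS : HasCoeffDerivAt S (C (-c) * M t) t) :
    a' = c - b * (X * R).coeff d := by
  have ha_eq : a = fun s => (X * P s).coeff d - (S s).coeff d := funext fun s => by
    simpa only [(hM s).2] using (hM s).1.eq_coeff_sub_coeff_of_eq_add_C_mul (hrec s)
  have hderiv := (hP.X_mul d).sub (hS d)
  have hMd : (M t).coeff d = 1 := (hM t).2 ▸ (hM t).1.coeff_natDegree
  rw [← ha_eq, ← mul_assoc, X_mul_C, mul_assoc, coeff_C_mul, coeff_C_mul, hMd] at hderiv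
  rw [ha.unique hderiv]
  noncomm_ring

end CoeffDeriv

theorem stmt18_general {p : ℕ}
    (Q : ℝ → ℤ → Polynomial (Matrix (Fin p) (Fin p) ℝ))
    (ξ ζ ξ' ζ' : ℕ → ℝ → Matrix (Fin p) (Fin p) ℝ)
    (hmonic : ∀ t (m : ℤ), 0 ≤ m → (Q t m).Monic ∧ ((Q t m).natDegree : ℤ) = m)
    (hξ0 : ∀ t, ξ 0 t = 0)
    (hrecEven : ∀ (n : ℕ) t,
      X * Q t (2 * (n : ℤ)) = Q t (2 * (n : ℤ) + 1) + C (ξ n t) * Q t (2 * (n : ℤ) - 1))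
    (hrecOdd : ∀ (n : ℕ) t,
      X * Q t (2 * (n : ℤ) + 1) = Q t (2 * (n : ℤ) + 2) + C (ζ (n + 1) t) * Q t (2 * (n : ℤ)))
    (hdξ : ∀ n t i j, HasDerivAt (fun s => ξ n s i j) (ξ' n t i j) t)
    (hdζ : ∀ n t i j, HasDerivAt (fun s => ζ n s i j) (ζ' n t i j) t)
    (hevolEven : ∀ (n : ℕ) t k i j,
      HasDerivAt (fun s => (Q s (2 * (n : ℤ))).coeff k i j)
        ((-(ξ n t * ζ n t) * (Q t (2 * (n : ℤ) - 2)).coeff k) i j) t)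
    (hevolOdd : ∀ (n : ℕ) t k i j,
      HasDerivAt (fun s => (Q s (2 * (n : ℤ) + 1)).coeff k i j)
        ((-(ζ (n + 1) t * ξ n t) * (Q t (2 * (n : ℤ) - 1)).coeff k) i j) t) :
    ∀ (n : ℕ) t,
      ξ' n t = ζ (n + 1) t * ξ n t - ξ n t * ζ n t ∧
      ζ' (n + 1) t = ξ (n + 1) t * ζ (n + 1) t - ζ (n + 1) t * ξ n t := by
  have hQmonic : ∀ s (m : ℤ) (d : ℕ), m = d → (Q s m).Monic ∧ (Q s m).natDegree = d := by
    rintro s _ d rfl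
    exact (hmonic s d d.cast_nonneg).imp_right Int.ofNat_inj.mp
  have hXQcoeff : ∀ s (m : ℤ) (d : ℕ), 0 ≤ m → m + 1 = d → (X * Q s m).coeff d = 1 := by
    intro s m d hm₀ hm
    obtain ⟨e, rfl⟩ : ∃ e, d = e + 1 := ⟨d - 1, by omega⟩
    rw [coeff_X_mul, ← (hQmonic s m e (by omega)).2, (hQmonic s m e (by omega)).1.coeff_natDegree]
  intro n t
  have hEven : ∀ n : ℕ, HasCoeffDerivAt (fun s => Q s (2 * (n : ℤ)))
      (C (-(ξ n t * ζ n t)) * Q t (2 * (n : ℤ) - 2)) t :=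
    fun n k i j => by simpa only [coeff_C_mul] using hevolEven n t k i j
  have hOdd : HasCoeffDerivAt (fun s => Q s (2 * (n : ℤ) + 1))
      (C (-(ζ (n + 1) t * ξ n t)) * Q t (2 * (n : ℤ) - 1)) t :=
    fun k i j => by simpa only [coeff_C_mul] using hevolOdd n t k i j
  constructor
  · rcases n with _ | n
    · have hξ0' : HasEntrywiseDerivAt (ξ 0) 0 t := by
        simpa only [funext hξ0] using hasEntrywiseDerivAt_const (0 : Matrix _ _ ℝ) t
      rw [HasEntrywiseDerivAt.unique (hdξ 0 t) hξ0', hξ0, mul_zero, zero_mul, sub_zero]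
    · rw [HasEntrywiseDerivAt.eq_of_X_mul_eq_add_C_mul (hdξ _ t) (hrecEven _)
        (hQmonic · _ (2 * n + 1) (by omega)) (hEven _) (by convert hOdd using 3),
        hXQcoeff t _ _ (by omega) (by omega), mul_one]
  · have hEven' := hEven (n + 1)
    rw [show (2 : ℤ) * ((n + 1 : ℕ) : ℤ) = 2 * n + 2 by push_cast; ring] at hEven'
    rw [HasEntrywiseDerivAt.eq_of_X_mul_eq_add_C_mul (hdζ _ t) (hrecOdd _)
      (hQmonic · _ (2 * n) (by omega)) hOdd (by convert hEven' using 3; omega)]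
    -- for `n = 0` the coefficient `ζ_1 ξ_0` vanishes, so nothing is needed about `Q_{-1}`
    rcases n with _ | n
    · rw [hξ0, mul_zero, zero_mul, sub_zero]
    · rw [hXQcoeff t _ _ (by omega) (by omega), mul_one]

/-- Compatibility of the reduced recurrences `x Q_{2n} = Q_{2n+1} + ξ_n Q_{2n-1}`,
`x Q_{2n+1} = Q_{2n+2} + ζ_{n+1} Q_{2n}` with the time evolutions
`∂_t Q_{2n} = -ξ_n ζ_n Q_{2n-2}`, `∂_t Q_{2n+1} = -ζ_{n+1} ξ_n Q_{2n-1}` yields the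
non-abelian Volterra lattice `∂_t ξ_n = ζ_{n+1} ξ_n - ξ_n ζ_n` and
`∂_t ζ_{n+1} = ξ_{n+1} ζ_{n+1} - ζ_{n+1} ξ_n`.  Polynomials are indexed by `ℤ` with
`Q_m := 0` for `m < 0` (so `Q_{-1} = Q_{-2} = 0`), monic of degree `m` for `m ≥ 0`,
with the semi-infinite convention `ξ_0 = 0`; entrywise derivatives. -/
theorem stmt18 {p : ℕ}
    (Q : ℝ → ℤ → Polynomial (Matrix (Fin p) (Fin p) ℝ))
    (ξ ζ ξ' ζ' : ℕ → ℝ → Matrix (Fin p) (Fin p) ℝ)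
    (hneg : ∀ t m, m < 0 → Q t m = 0)
    (hmonic : ∀ t (m : ℤ), 0 ≤ m → (Q t m).Monic ∧ ((Q t m).natDegree : ℤ) = m)
    (hξ0 : ∀ t, ξ 0 t = 0)
    (hrecEven : ∀ (n : ℕ) t,
      X * Q t (2 * (n : ℤ)) = Q t (2 * (n : ℤ) + 1) + C (ξ n t) * Q t (2 * (n : ℤ) - 1))
    (hrecOdd : ∀ (n : ℕ) t,
      X * Q t (2 * (n : ℤ) + 1) = Q t (2 * (n : ℤ) + 2) + C (ζ (n + 1) t) * Q t (2 * (n : ℤ)))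
    (hdξ : ∀ n t i j, HasDerivAt (fun s => ξ n s i j) (ξ' n t i j) t)
    (hdζ : ∀ n t i j, HasDerivAt (fun s => ζ n s i j) (ζ' n t i j) t)
    (hevolEven : ∀ (n : ℕ) t k i j,
      HasDerivAt (fun s => (Q s (2 * (n : ℤ))).coeff k i j)
        ((-(ξ n t * ζ n t) * (Q t (2 * (n : ℤ) - 2)).coeff k) i j) t)
    (hevolOdd : ∀ (n : ℕ) t k i j,
      HasDerivAt (fun s => (Q s (2 * (n : ℤ) + 1)).coeff k i j)
        ((-(ζ (n + 1) t * ξ n t) * (Q t (2 * (n : ℤ) - 1)).coeff k) i j) t) :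
    ∀ (n : ℕ) t,
      ξ' n t = ζ (n + 1) t * ξ n t - ξ n t * ζ n t ∧
      ζ' (n + 1) t = ξ (n + 1) t * ζ (n + 1) t - ζ (n + 1) t * ξ n t :=
  stmt18_general Q ξ ζ ξ' ζ' hmonic hξ0 hrecEven hrecOdd hdξ hdζ hevolEven hevolOdd
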